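/- arXiv:1707.08487 — 6 statements merged into one kernel-verified Lean document; each statement's English description precedes it below -/
import Mathlib

section
/- If N_{q^{2n}/q^n}(b) ≠ 1, then the map x ↦ b·x^{q^s} + x^{q^{s+n}} on F_{q^{2n}} is injective (equivalently, bijective). -/
/-- If N_{q^{2n}/q^n}(b) ≠ 1 then x ↦ b·x^{q^s} + x^{q^{s+n}} is injective. -/
theorem stmt_1 (q n s : ℕ) (hn : 1 ≤ n)
    (F : Type) [Field F] [Fintype F] (hF : Fintype.card F = q ^ (2 * n))
    (b : F) (hb : b ^ (q ^ n + 1) ≠ 1) :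
    Function.Injective (fun x : F => b * x ^ q ^ s + x ^ q ^ (s + n)) := by
  obtain ⟨p, hp⟩ := CharP.exists F
  haveI := hp
  obtain ⟨m, hpp, hm⟩ := FiniteField.card F p
  haveI : Fact p.Prime := ⟨hpp⟩
  -- q is a power of p
  obtain ⟨j, hj, hqj⟩ : ∃ j ≤ (m : ℕ), q = p ^ j := by
    refine (Nat.dvd_prime_pow hpp).mp ?_
    rw [← hm, hF]
    exact dvd_pow_self q (by omega)
  intro x y h
  simp only at h
  by_contra hxy
  have hz : x - y ≠ 0 := sub_ne_zero.mpr hxy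
  set w : F := (x - y) ^ q ^ s with hw
  have hwne : w ≠ 0 := pow_ne_zero _ hz
  -- key equation : b * w + w ^ q ^ n = 0
  have key : b * w + w ^ q ^ n = 0 := by
    have es : q ^ s = p ^ (j * s) := by rw [hqj, ← pow_mul]
    have en : q ^ n = p ^ (j * n) := by rw [hqj, ← pow_mul]
    have hsub : (x - y) ^ q ^ s = x ^ q ^ s - y ^ q ^ s := by
      rw [es]; exact sub_pow_char_pow x y _
    have hsub2 : (x ^ q ^ s - y ^ q ^ s) ^ q ^ n
        = (x ^ q ^ s) ^ q ^ n - (y ^ q ^ s) ^ q ^ n := by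
      rw [en]; exact sub_pow_char_pow _ _ _
    have hB : ∀ t : F, t ^ q ^ (s + n) = (t ^ q ^ s) ^ q ^ n := by
      intro t; rw [← pow_mul, ← pow_add]
    rw [hB x, hB y] at h
    rw [hw, hsub, hsub2]
    ring_nf
    ring_nf at h
    linear_combination h
  have hwn : w ^ q ^ n = -(b * w) := by linear_combination key
  have hneg : ∀ a : F, (-a) ^ q ^ n = -(a ^ q ^ n) := by
    intro a
    have en : q ^ n = p ^ (j * n) := by rw [hqj, ← pow_mul]
    rw [en, neg_eq_neg_one_mul, mul_pow, neg_one_pow_char_pow F, neg_one_mul]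
  clear_value w
  have hcard : w ^ q ^ (2 * n) = w := by rw [← hF]; exact FiniteField.pow_card w
  have h2 : w ^ q ^ (2 * n) = b ^ (q ^ n + 1) * w := by
    have : w ^ q ^ (2 * n) = (w ^ q ^ n) ^ q ^ n := by
      rw [← pow_mul, ← pow_add, two_mul]
    rw [this, hwn, hneg, mul_pow, hwn, pow_succ]
    ring
  rw [hcard] at h2
  apply hb
  have := mul_right_cancel₀ hwne (h2.symm.trans (one_mul w).symm)
  exact this
end

section
/- For every prime power q ≥ 7 with q odd, there exists z ∈ F_q \ {0, 1, 4} such that z^2 - 4z is a square in F_q. -/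
/-- for every odd prime power q ≥ 7 there is z ∈ F_q \ {0,1,4}
with z² - 4z a square. -/
theorem stmt_9 (q : ℕ) (hq : Odd q) (hq7 : 7 ≤ q)
    (K : Type) [Field K] [Fintype K] (hK : Fintype.card K = q) :
    ∃ z : K, z ≠ 0 ∧ z ≠ 1 ∧ z ≠ 4 ∧ ∃ c : K, z ^ 2 - 4 * z = c ^ 2 := by
  -- find u ∈ K with u ≠ 0, 1, -1 and u^2 + u + 1 ≠ 0
  classical
  set p : Polynomial K := Polynomial.X ^ 2 + Polynomial.X + 1 with hp
  have hdeg : p.natDegree = 2 := by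
    rw [hp]; compute_degree!
  set B : Finset K := insert 0 (insert 1 (insert (-1) p.roots.toFinset)) with hB
  have hBcard : B.card ≤ 5 := by
    have h1 : p.roots.toFinset.card ≤ 2 := by
      calc p.roots.toFinset.card ≤ Multiset.card p.roots := p.roots.toFinset_card_le
        _ ≤ p.natDegree := Polynomial.card_roots' p
        _ = 2 := hdeg
    calc B.card ≤ (insert 1 (insert (-1) p.roots.toFinset)).card + 1 :=
          Finset.card_insert_le _ _
      _ ≤ ((insert (-1) p.roots.toFinset).card + 1) + 1 := by
          have := Finset.card_insert_le (1 : K) (insert (-1) p.roots.toFinset); omega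
      _ ≤ ((p.roots.toFinset.card + 1) + 1) + 1 := by
          have := Finset.card_insert_le (-1 : K) p.roots.toFinset; omega
      _ ≤ 5 := by omega
  have hex : ∃ u : K, u ∉ B := by
    by_contra h
    push_neg at h
    have hsub : (Finset.univ : Finset K) ⊆ B := fun x _ => h x
    have := Finset.card_le_card hsub
    rw [Finset.card_univ, hK] at this
    omega
  obtain ⟨u, hu⟩ := hex
  simp only [hB, Finset.mem_insert, not_or] at hu
  obtain ⟨hu0, hu1, hum1, hur⟩ := hu
  have huq : u ^ 2 + u + 1 ≠ 0 := by
    intro h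
    apply hur
    rw [Multiset.mem_toFinset, Polynomial.mem_roots']
    refine ⟨?_, ?_⟩
    · intro hpz
      rw [hpz] at hdeg
      simp at hdeg
    · simp [hp, Polynomial.IsRoot.def]
      linear_combination h
  refine ⟨u + u⁻¹ + 2, ?_, ?_, ?_, u - u⁻¹, ?_⟩
  · intro h
    apply hum1
    have : u * (u + u⁻¹ + 2) = 0 := by rw [h, mul_zero]
    rw [mul_add, mul_add, mul_inv_cancel₀ hu0] at this
    have h2 : (u + 1) ^ 2 = 0 := by ring_nf; ring_nf at this; linear_combination this
    have h3 := pow_eq_zero_iff (n := 2) (by norm_num) |>.mp h2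
    linear_combination h3
  · intro h
    apply huq
    have : u * (u + u⁻¹ + 2) = u * 1 := by rw [h]
    rw [mul_add, mul_add, mul_inv_cancel₀ hu0, mul_one] at this
    linear_combination this
  · intro h
    apply hu1
    have : u * (u + u⁻¹ + 2) = u * 4 := by rw [h]
    rw [mul_add, mul_add, mul_inv_cancel₀ hu0] at this
    have h2 : (u - 1) ^ 2 = 0 := by linear_combination this
    have h3 := pow_eq_zero_iff (n := 2) (by norm_num) |>.mp h2
    linear_combination h3
  · field_simp
    ring
end

section
/- Let U_{b,s} = {(x, b·x^{q^s}+x^{q^{s+n}}) : x ∈ F_{q^{2n}}} and U_{b̄,s̄} analogously, with 1 ≤ s, s̄ < n, gcd(s,n) = gcd(s̄,n) = 1, N_{q^{2n}/q^n}(b) ≠ 1 ≠ N_{q^{2n}/q^n}(b̄), and s ≠ s̄, s + s̄ ≠ n. Then there is no σ ∈ Gal(F_{q^{2n}}/F_q) and invertible matrix (α β; γ δ) over F_{q^{2n}} mapping {(x^σ, (b x^{q^s}+x^{q^{s+n}})^σ) : x} onto U_{b̄,s̄}. -/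
open Polynomial

lemma red_pow {F : Type} [Field F] [Fintype F] {q m : ℕ}
    (hF : Fintype.card F = q ^ m) (x : F) (a : ℕ) :
    x ^ q ^ a = x ^ q ^ (a % m) := by
  have h1 : q ^ a = q ^ (a % m) * (q ^ m) ^ (a / m) := by
    rw [← pow_mul, ← pow_add, Nat.mod_add_div]
  rw [h1, pow_mul, ← hF, FiniteField.pow_card_pow]

lemma frob_add {F : Type} [Field F] [Fintype F] {q m : ℕ} (hm : 0 < m)
    (hF : Fintype.card F = q ^ m) (k : ℕ) (x y : F) :
    (x + y) ^ q ^ k = x ^ q ^ k + y ^ q ^ k := by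
  set p := ringChar F with hpdef
  haveI : Fact p.Prime := ⟨CharP.char_is_prime F p⟩
  obtain ⟨f, hp, hcard⟩ := FiniteField.card F p
  have hqm : q ^ m = p ^ (f : ℕ) := by rw [← hF, hcard]
  have hdvd : q ∣ p ^ (f : ℕ) := by
    rw [← hqm]; exact dvd_pow_self q hm.ne'
  obtain ⟨e, -, rfl⟩ := (Nat.dvd_prime_pow hp).mp hdvd
  rw [← pow_mul, add_pow_char_pow]

/-- for s ≠ s̄ and s + s̄ ≠ n, no semilinear map (with companion
automorphism in Gal(F_{q^{2n}}/F_q)) carries U_{b,s} onto U_{b̄,s̄}. -/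

theorem stmt_13 (q n s s' : ℕ) (hn : 2 ≤ n)
    (hs : 1 ≤ s) (hsn : s < n) (hs' : 1 ≤ s') (hs'n : s' < n)
    (hg : Nat.gcd s n = 1) (hg' : Nat.gcd s' n = 1)
    (hne : s ≠ s') (hsum : s + s' ≠ n)
    (F : Type) [Field F] [Fintype F] (hF : Fintype.card F = q ^ (2 * n))
    (b b' : F) (hb : b ^ (q ^ n + 1) ≠ 1) (hb' : b' ^ (q ^ n + 1) ≠ 1) :
    ¬ ∃ (j : ℕ) (α β γ δ : F), α * δ - β * γ ≠ 0 ∧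
        Set.range (fun x : F =>
          (α * x ^ q ^ j + β * (b * x ^ q ^ s + x ^ q ^ (s + n)) ^ q ^ j,
           γ * x ^ q ^ j + δ * (b * x ^ q ^ s + x ^ q ^ (s + n)) ^ q ^ j))
          = Set.range (fun y : F => (y, b' * y ^ q ^ s' + y ^ q ^ (s' + n))) := by
  rintro ⟨j, α, β, γ, δ, hdet, hset⟩
  set m := 2 * n with hm
  have hm0 : 0 < m := by omega
  have hcard1 : 1 < Fintype.card F := Fintype.one_lt_card
  have hq : 2 ≤ q := by
    by_contra h
    have h1 : q ^ m ≤ 1 ^ m := Nat.pow_le_pow_left (by omega) m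
    rw [hF] at hcard1; rw [one_pow] at h1; omega
  have fa : ∀ (k : ℕ) (x y : F), (x + y) ^ q ^ k = x ^ q ^ k + y ^ q ^ k :=
    fun k x y => frob_add hm0 hF k x y
  have red : ∀ (x : F) (a : ℕ), x ^ q ^ a = x ^ q ^ (a % m) :=
    fun x a => red_pow hF x a
  -- functional identity from set equality
  have key : ∀ x : F,
      γ * x ^ q ^ j + δ * (b * x ^ q ^ s + x ^ q ^ (s + n)) ^ q ^ j
        = b' * (α * x ^ q ^ j + β * (b * x ^ q ^ s + x ^ q ^ (s + n)) ^ q ^ j) ^ q ^ s'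
          + (α * x ^ q ^ j + β * (b * x ^ q ^ s + x ^ q ^ (s + n)) ^ q ^ j) ^ q ^ (s' + n) := by
    intro x
    have hx : (α * x ^ q ^ j + β * (b * x ^ q ^ s + x ^ q ^ (s + n)) ^ q ^ j,
        γ * x ^ q ^ j + δ * (b * x ^ q ^ s + x ^ q ^ (s + n)) ^ q ^ j)
        ∈ Set.range (fun y : F => (y, b' * y ^ q ^ s' + y ^ q ^ (s' + n))) := by
      rw [← hset]; exact Set.mem_range_self x
    obtain ⟨y, hy⟩ := hx
    have h1 : y = α * x ^ q ^ j + β * (b * x ^ q ^ s + x ^ q ^ (s + n)) ^ q ^ j :=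
      congrArg Prod.fst hy
    have h2 := congrArg Prod.snd hy
    simp only at h2
    rw [h1] at h2
    exact h2.symm
  set B := b ^ q ^ j with hB
  have hP : ∀ x : F, (b * x ^ q ^ s + x ^ q ^ (s + n)) ^ q ^ j
      = B * x ^ q ^ ((s + j) % m) + x ^ q ^ ((s + n + j) % m) := by
    intro x
    rw [fa, mul_pow, ← pow_mul, ← pow_add, ← pow_mul, ← pow_add,
      red x (s + j), red x (s + n + j)]
  have hApow : ∀ (t : ℕ) (x : F),
      (α * x ^ q ^ j + β * (b * x ^ q ^ s + x ^ q ^ (s + n)) ^ q ^ j) ^ q ^ t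
      = α ^ q ^ t * x ^ q ^ ((j + t) % m)
        + (β * B) ^ q ^ t * x ^ q ^ ((s + j + t) % m)
        + β ^ q ^ t * x ^ q ^ ((s + n + j + t) % m) := by
    intro t x
    rw [hP x]
    simp only [mul_add, ← mul_assoc, fa, mul_pow, ← pow_mul, ← pow_add]
    rw [red x (j + t), red x ((s + j) % m + t), red x ((s + n + j) % m + t)]
    simp only [Nat.mod_add_mod]
    ring
  -- canonical reduced identity
  have key' : ∀ x : F,
      γ * x ^ q ^ (j % m) + (δ * B) * x ^ q ^ ((s + j) % m) + δ * x ^ q ^ ((s + n + j) % m)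
      = b' * α ^ q ^ s' * x ^ q ^ ((s' + j) % m)
        + b' * (β * B) ^ q ^ s' * x ^ q ^ ((s + s' + j) % m)
        + b' * β ^ q ^ s' * x ^ q ^ ((s + s' + n + j) % m)
        + α ^ q ^ (s' + n) * x ^ q ^ ((s' + n + j) % m)
        + (β * B) ^ q ^ (s' + n) * x ^ q ^ ((s + s' + n + j) % m)
        + β ^ q ^ (s' + n) * x ^ q ^ ((s + s' + m + j) % m) := by
    intro x
    have h := key x
    rw [hApow s' x, hApow (s' + n) x, hP x, red x j,
      show j + s' = s' + j from by omega,
      show s + j + s' = s + s' + j from by omega,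
      show s + n + j + s' = s + s' + n + j from by omega,
      show j + (s' + n) = s' + n + j from by omega,
      show s + j + (s' + n) = s + s' + n + j from by omega,
      show s + n + j + (s' + n) = s + s' + m + j from by omega] at h
    linear_combination h
  -- the linearized polynomial
  set p : F[X] :=
      C γ * X ^ (q ^ (j % m)) + C (δ * B) * X ^ (q ^ ((s + j) % m))
      + C δ * X ^ (q ^ ((s + n + j) % m))
      - C (b' * α ^ q ^ s') * X ^ (q ^ ((s' + j) % m))
      - C (b' * (β * B) ^ q ^ s') * X ^ (q ^ ((s + s' + j) % m))
      - C (b' * β ^ q ^ s') * X ^ (q ^ ((s + s' + n + j) % m))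
      - C (α ^ q ^ (s' + n)) * X ^ (q ^ ((s' + n + j) % m))
      - C ((β * B) ^ q ^ (s' + n)) * X ^ (q ^ ((s + s' + n + j) % m))
      - C (β ^ q ^ (s' + n)) * X ^ (q ^ ((s + s' + m + j) % m)) with hpdef
  have heval : ∀ x : F, p.eval x = 0 := by
    intro x
    rw [hpdef]
    simp only [eval_add, eval_sub, eval_mul, eval_pow, eval_C, eval_X]
    linear_combination key' x
  have hexp : ∀ a : ℕ, q ^ (a % m) ≤ q ^ (m - 1) := fun a =>
    Nat.pow_le_pow_right (by omega) (by have := Nat.mod_lt a hm0; omega)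
  have hterm : ∀ (c : F) (a : ℕ), (C c * X ^ (q ^ (a % m)) : F[X]).natDegree ≤ q ^ (m - 1) := by
    intro c a
    refine (natDegree_C_mul_le _ _).trans ?_
    simpa [natDegree_X_pow] using hexp a
  have hsum2 : ∀ {pp qq : F[X]}, pp.natDegree ≤ q ^ (m - 1) → qq.natDegree ≤ q ^ (m - 1) →
      (pp + qq).natDegree ≤ q ^ (m - 1) := fun h1 h2 => (natDegree_add_le _ _).trans (max_le h1 h2)
  have hsub2 : ∀ {pp qq : F[X]}, pp.natDegree ≤ q ^ (m - 1) → qq.natDegree ≤ q ^ (m - 1) →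
      (pp - qq).natDegree ≤ q ^ (m - 1) := fun h1 h2 => (natDegree_sub_le _ _).trans (max_le h1 h2)
  have hdeg : p.natDegree ≤ q ^ (m - 1) := by
    rw [hpdef]
    exact hsub2 (hsub2 (hsub2 (hsub2 (hsub2 (hsub2 (hsum2 (hsum2 (hterm _ _) (hterm _ _))
      (hterm _ _)) (hterm _ _)) (hterm _ _)) (hterm _ _)) (hterm _ _)) (hterm _ _)) (hterm _ _)
  have hlt : p.natDegree < Fintype.card F :=
    lt_of_le_of_lt hdeg (by rw [hF]; exact Nat.pow_lt_pow_right hq (by omega))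
  have hp0 : p = 0 :=
    Polynomial.eq_zero_of_natDegree_lt_card_of_eval_eq_zero p Function.injective_id
      (fun x => heval x) (by simpa using hlt)
  -- distinctness of exponents
  have hdist : ∀ u v : ℕ, u % m ≠ v % m → q ^ ((u + j) % m) ≠ q ^ ((v + j) % m) := by
    intro u v huv h
    exact huv (Nat.ModEq.add_right_cancel' j (Nat.pow_right_injective hq h))
  have hdist0 : ∀ v : ℕ, 0 % m ≠ v % m → q ^ (j % m) ≠ q ^ ((v + j) % m) := by
    intro v hv h
    apply hv
    have h2 : j % m = (v + j) % m := Nat.pow_right_injective hq h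
    have h3 : (0 + j) % m = (v + j) % m := by rwa [zero_add]
    exact Nat.ModEq.add_right_cancel' j h3
  have hmod0 : 0 % m = 0 := Nat.zero_mod m
  have hmods : s % m = s := Nat.mod_eq_of_lt (by omega)
  have hmodsn : (s + n) % m = s + n := Nat.mod_eq_of_lt (by omega)
  have hmods' : s' % m = s' := Nat.mod_eq_of_lt (by omega)
  have hmodss' : (s + s') % m = s + s' := Nat.mod_eq_of_lt (by omega)
  have hmods'n : (s' + n) % m = s' + n := Nat.mod_eq_of_lt (by omega)
  have hmodssm : (s + s' + m) % m = s + s' := by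
    rw [Nat.add_mod_right, hmodss']
  have hmodssn : (s + s' + n) % m = s + s' + n ∨
      ((s + s' + n) % m = s + s' + n - m ∧ m ≤ s + s' + n) := by
    rcases Nat.lt_or_ge (s + s' + n) m with h | h
    · exact Or.inl (Nat.mod_eq_of_lt h)
    · exact Or.inr ⟨by rw [Nat.mod_eq_sub_mod h, Nat.mod_eq_of_lt (by omega)], h⟩
  -- γ = 0
  have hγ : γ = 0 := by
    have hc : p.coeff (q ^ (j % m)) = 0 := by rw [hp0]; simp
    rw [hpdef] at hc
    have d1 : q ^ (j % m) ≠ q ^ ((s + j) % m) :=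
      hdist0 s (by rw [hmod0, hmods]; omega)
    have d2 : q ^ (j % m) ≠ q ^ ((s + n + j) % m) :=
      hdist0 (s + n) (by rw [hmod0, hmodsn]; omega)
    have d3 : q ^ (j % m) ≠ q ^ ((s' + j) % m) :=
      hdist0 s' (by rw [hmod0, hmods']; omega)
    have d4 : q ^ (j % m) ≠ q ^ ((s + s' + j) % m) :=
      hdist0 (s + s') (by rw [hmod0, hmodss']; omega)
    have d5 : q ^ (j % m) ≠ q ^ ((s + s' + n + j) % m) :=
      hdist0 (s + s' + n) (by rw [hmod0]; rcases hmodssn with h | ⟨h, hge⟩ <;> rw [h] <;> omega)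
    have d6 : q ^ (j % m) ≠ q ^ ((s' + n + j) % m) :=
      hdist0 (s' + n) (by rw [hmod0, hmods'n]; omega)
    have d7 : q ^ (j % m) ≠ q ^ ((s + s' + m + j) % m) :=
      hdist0 (s + s' + m) (by rw [hmod0, hmodssm]; omega)
    simp only [coeff_sub, coeff_add, coeff_C_mul, coeff_X_pow, if_pos rfl, if_true,
      if_neg d1, if_neg d2, if_neg d3, if_neg d4, if_neg d5, if_neg d6, if_neg d7,
      mul_one, mul_zero, sub_zero, add_zero, zero_add, zero_sub, neg_eq_zero] at hc
    exact hc
  -- δ = 0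
  have hδ : δ = 0 := by
    have hc : p.coeff (q ^ ((s + n + j) % m)) = 0 := by rw [hp0]; simp
    rw [hpdef] at hc
    have d1 : q ^ ((s + n + j) % m) ≠ q ^ (j % m) :=
      (hdist0 (s + n) (by rw [hmod0, hmodsn]; omega)).symm
    have d2 : q ^ ((s + n + j) % m) ≠ q ^ ((s + j) % m) :=
      hdist (s + n) s (by rw [hmods, hmodsn]; omega)
    have d3 : q ^ ((s + n + j) % m) ≠ q ^ ((s' + j) % m) :=
      hdist (s + n) s' (by rw [hmods', hmodsn]; omega)
    have d4 : q ^ ((s + n + j) % m) ≠ q ^ ((s + s' + j) % m) :=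
      hdist (s + n) (s + s') (by rw [hmodss', hmodsn]; omega)
    have d5 : q ^ ((s + n + j) % m) ≠ q ^ ((s + s' + n + j) % m) :=
      hdist (s + n) (s + s' + n) (by rw [hmodsn]; rcases hmodssn with h | ⟨h, hge⟩ <;> rw [h] <;> omega)
    have d6 : q ^ ((s + n + j) % m) ≠ q ^ ((s' + n + j) % m) :=
      hdist (s + n) (s' + n) (by rw [hmods'n, hmodsn]; omega)
    have d7 : q ^ ((s + n + j) % m) ≠ q ^ ((s + s' + m + j) % m) :=
      hdist (s + n) (s + s' + m) (by rw [hmodssm, hmodsn]; omega)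
    simp only [coeff_sub, coeff_add, coeff_C_mul, coeff_X_pow, if_pos rfl, if_true,
      if_neg d1, if_neg d2, if_neg d3, if_neg d4, if_neg d5, if_neg d6, if_neg d7,
      mul_one, mul_zero, sub_zero, add_zero, zero_add, zero_sub, neg_eq_zero] at hc
    exact hc
  apply hdet
  rw [hγ, hδ]
  ring
end

section
/- Let q be odd, b ∈ F_{q^8} with b^2 = -1, and suppose b ∈ F_q (so q ≡ 1 mod 4). If m ∈ F_{q^8} satisfies 0 = 4(-m + m^{q^4}) + b·m^{1+q^3+q^4+q^5}(m^{q^2} + m^{q^6}), then m = 0. -/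
/-- q odd, b² = -1, b ∈ F_q; the equation
0 = 4(-m + m^{q^4}) + b m^{1+q^3+q^4+q^5}(m^{q^2} + m^{q^6}) forces m = 0. -/
theorem stmt_15 (q : ℕ) (hq : Odd q)
    (F : Type) [Field F] [Fintype F] (hF : Fintype.card F = q ^ 8)
    (b : F) (hb2 : b ^ 2 = -1) (hbq : b ^ q = b)
    (m : F)
    (hm : 0 = 4 * (-m + m ^ q ^ 4)
        + b * m ^ (1 + q ^ 3 + q ^ 4 + q ^ 5) * (m ^ q ^ 2 + m ^ q ^ 6)) :
    m = 0 := by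
  -- setup: characteristic
  have hq0 : q ≠ 0 := by rintro rfl; exact (Nat.not_odd_iff_even.mpr Even.zero) hq
  have hq1 : 1 < q := by
    rcases Nat.lt_or_ge q 2 with h | h
    · interval_cases q
      · exact absurd hq (by decide)
      · exfalso
        have := Fintype.one_lt_card (α := F)
        omega
    · exact h
  obtain ⟨p, hcp⟩ := CharP.exists F
  obtain ⟨n, hp, hcard⟩ := FiniteField.card F p
  have hqdvd : q ∣ p ^ (n : ℕ) := by
    rw [← hcard, hF]
    exact dvd_pow_self q (by norm_num)
  obtain ⟨k, hkn, hqpk⟩ := (Nat.dvd_prime_pow hp).1 hqdvd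
  haveI : Fact p.Prime := ⟨hp⟩
  have hpodd : p ≠ 2 := by
    rintro rfl
    have hk0 : k ≠ 0 := by rintro rfl; simp at hqpk; omega
    have : 2 ∣ q := hqpk ▸ dvd_pow_self 2 hk0
    exact (Nat.not_even_iff_odd.mpr hq) (even_iff_two_dvd.mpr this)
  have h2ne : (2 : F) ≠ 0 := by
    intro h
    have h2 : ((2 : ℕ) : F) = 0 := by exact_mod_cast h
    have hdvd := (CharP.cast_eq_zero_iff F p 2).1 h2
    exact hpodd ((Nat.prime_dvd_prime_iff_eq hp Nat.prime_two).1 hdvd)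
  have h4ne : (4 : F) ≠ 0 := by
    intro h
    have : (2 : F) * 2 = 0 := by rw [show (2:F)*2 = 4 by norm_num, h]
    rcases mul_eq_zero.1 this with h' | h' <;> exact h2ne h'
  -- Frobenius-type additivity
  have hadd : ∀ x y : F, (x + y) ^ q = x ^ q + y ^ q := by
    intro x y
    rw [hqpk]
    exact add_pow_char_pow ..
  have hnegq : ∀ x : F, (-x) ^ q = -(x ^ q) := fun x => hq.neg_pow x
  have h2q : (2 : F) ^ q = 2 := by
    have h := hadd (1 : F) 1
    norm_num at h
    exact h
  have h4q : (4 : F) ^ q = 4 := by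
    rw [show (4 : F) = 2 * 2 by norm_num, mul_pow, h2q]
  have h8 : ∀ x : F, x ^ q ^ 8 = x := by
    intro x; rw [← hF]; exact FiniteField.pow_card x
  have hpp : ∀ (i j : ℕ) (x : F), (x ^ q ^ i) ^ q ^ j = x ^ q ^ (i + j) := by
    intro i j x; rw [← pow_mul, ← pow_add]
  have hw8 : (m ^ q ^ 7) ^ q = m := by
    rw [← pow_mul, ← pow_succ]
    exact h8 m
  have h0q : ((0 : F)) ^ q = 0 := zero_pow hq0
  -- assume m ≠ 0
  by_contra hm0
  have nz : ∀ i : ℕ, m ^ q ^ i ≠ 0 := fun i => pow_ne_zero _ hm0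
  have hb0 : b ≠ 0 := by intro h; rw [h] at hb2; norm_num at hb2
  -- shifted equations
  have E1 : 0 = 4 * (-(m^q) + m^(q^5)) + b * (m^q * m^(q^4) * m^(q^5) * m^(q^6)) * (m^(q^3) + m^(q^7)) := by
    have h := congrArg (fun z : F => z ^ q) hm
    simp only [hadd, hnegq, mul_pow, hbq, h4q, h0q, hw8] at h
    linear_combination h
  have E2 : 0 = 4 * (-(m^(q^2)) + m^(q^6)) + b * (m^(q^2) * m^(q^5) * m^(q^6) * m^(q^7)) * (m^(q^4) + m) := by
    have h := congrArg (fun z : F => z ^ q) E1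
    simp only [hadd, hnegq, mul_pow, hbq, h4q, h0q, hw8] at h
    linear_combination h
  have E3 : 0 = 4 * (-(m^(q^3)) + m^(q^7)) + b * (m^(q^3) * m^(q^6) * m^(q^7) * m) * (m^(q^5) + m^q) := by
    have h := congrArg (fun z : F => z ^ q) E2
    simp only [hadd, hnegq, mul_pow, hbq, h4q, h0q, hw8] at h
    linear_combination h
  have E4 : 0 = 4 * (-(m^(q^4)) + m) + b * (m^(q^4) * m^(q^7) * m * m^q) * (m^(q^6) + m^(q^2)) := by
    have h := congrArg (fun z : F => z ^ q) E3
    simp only [hadd, hnegq, mul_pow, hbq, h4q, h0q, hw8] at h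
    linear_combination h
  have E5 : 0 = 4 * (-(m^(q^5)) + m^q) + b * (m^(q^5) * m * m^q * m^(q^2)) * (m^(q^7) + m^(q^3)) := by
    have h := congrArg (fun z : F => z ^ q) E4
    simp only [hadd, hnegq, mul_pow, hbq, h4q, h0q, hw8] at h
    linear_combination h
  have E6 : 0 = 4 * (-(m^(q^6)) + m^(q^2)) + b * (m^(q^6) * m^q * m^(q^2) * m^(q^3)) * (m + m^(q^4)) := by
    have h := congrArg (fun z : F => z ^ q) E5
    simp only [hadd, hnegq, mul_pow, hbq, h4q, h0q, hw8] at h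
    linear_combination h
  -- case analysis
  by_cases hc1 : m ^ q ^ 2 + m ^ q ^ 6 = 0
  · -- then m^{q^4} = m, hence m^{q^6} = m^{q^2}, hence 2 m^{q^2} = 0
    have h44 : (4 : F) * (m ^ q ^ 4 - m) = 0 := by
      linear_combination (-1 : F) * hm - b * m ^ (1 + q^3 + q^4 + q^5) * hc1
    have h04 : m ^ q ^ 4 = m := by
      have := (mul_eq_zero.mp h44).resolve_left h4ne
      exact sub_eq_zero.mp this
    have h62 : m ^ q ^ 6 = m ^ q ^ 2 := by
      have h2 := congrArg (fun z : F => z ^ q ^ 2) h04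
      simp only [hpp] at h2
      norm_num at h2
      exact h2
    have : (2 : F) * m ^ q ^ 2 = 0 := by linear_combination hc1 - h62
    rcases mul_eq_zero.mp this with h' | h'
    · exact h2ne h'
    · exact nz 2 h'
  by_cases hc2 : m + m ^ q ^ 4 = 0
  · -- then m^{q^6} = m^{q^2}, hence m = m^{q^4}, hence 2m = 0
    have h44 : (4 : F) * (m ^ q ^ 2 - m ^ q ^ 6) = 0 := by
      linear_combination E2 + b * (m^(q^2) * m^(q^5) * m^(q^6) * m^(q^7)) * hc2
    have h26 : m ^ q ^ 2 = m ^ q ^ 6 := by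
      have := (mul_eq_zero.mp h44).resolve_left h4ne
      exact sub_eq_zero.mp this
    have h04 : m ^ q ^ 4 = m := by
      have h2 := congrArg (fun z : F => z ^ q ^ 2) h26
      simp only [hpp] at h2
      norm_num at h2
      rw [h8] at h2
      exact h2
    have : (2 : F) * m = 0 := by linear_combination hc2 - h04
    rcases mul_eq_zero.mp this with h' | h'
    · exact h2ne h'
    · exact hm0 h'
  -- main case
  have hprod : (b * m^(q^2) * m^(q^6) * (m + m^(q^4))) * (m^q * m^(q^3) + m^(q^5) * m^(q^7)) = 0 := by
    linear_combination (-1 : F) * E2 - E6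
  have hR : m^q * m^(q^3) + m^(q^5) * m^(q^7) = 0 := by
    refine (mul_eq_zero.mp hprod).resolve_left ?_
    exact mul_ne_zero (mul_ne_zero (mul_ne_zero hb0 (nz 2)) (nz 6)) hc2
  -- transfer hR three times to get hS : m^{q^4} m^{q^6} + m m^{q^2} = 0
  have hR1 : m^(q^2) * m^(q^4) + m^(q^6) * m = 0 := by
    have h := congrArg (fun z : F => z ^ q) hR
    simp only [hadd, mul_pow, h0q, hw8] at h
    linear_combination h
  have hR2 : m^(q^3) * m^(q^5) + m^(q^7) * m^q = 0 := by
    have h := congrArg (fun z : F => z ^ q) hR1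
    simp only [hadd, mul_pow, h0q, hw8] at h
    linear_combination h
  have hS : m^(q^4) * m^(q^6) + m * m^(q^2) = 0 := by
    have h := congrArg (fun z : F => z ^ q) hR2
    simp only [hadd, mul_pow, h0q, hw8] at h
    linear_combination h
  -- key identity from E2
  have hkey : (m + m^(q^4)) * (m * m^(q^2)) * (b * (m * m^(q^2)) * (m^q * m^(q^3)) - 4) = 0 := by
    linear_combination (-(m * m^(q^4))) * E2
      + (-4*m - b * m * m^(q^2) * m^(q^5) * m^(q^7) * (m + m^(q^4))) * hS
      + (b * m^2 * (m^(q^2))^2 * (m + m^(q^4))) * hR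
  have hP : b * (m * m^(q^2)) * (m^q * m^(q^3)) = 4 := by
    have h1 := (mul_eq_zero.mp hkey).resolve_left
      (mul_ne_zero hc2 (mul_ne_zero hm0 (nz 2)))
    exact sub_eq_zero.mp h1
  have hPq : b * (m^q * m^(q^3)) * (m^(q^2) * m^(q^4)) = 4 := by
    have h := congrArg (fun z : F => z ^ q) hP
    simp only [mul_pow, hbq, h4q, hw8] at h
    linear_combination h
  have hdiff : (b * (m^q * m^(q^2) * m^(q^3))) * (m - m^(q^4)) = 0 := by
    linear_combination hP - hPq
  have h04 : m = m ^ q ^ 4 := by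
    have h1 := (mul_eq_zero.mp hdiff).resolve_left
      (mul_ne_zero hb0 (mul_ne_zero (mul_ne_zero (pow_ne_zero q hm0) (nz 2)) (nz 3)))
    exact sub_eq_zero.mp h1
  have h26 : m ^ q ^ 2 = m ^ q ^ 6 := by
    have h2 := congrArg (fun z : F => z ^ q ^ 2) h04
    simp only [hpp] at h2
    norm_num at h2
    exact h2
  have hfin : (2 : F) * (m * m ^ q ^ 2) = 0 := by
    linear_combination hS + (m ^ q ^ 2) * h04 + (m ^ q ^ 4) * h26
  rcases mul_eq_zero.mp hfin with h' | h'
  · exact h2ne h'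
  · rcases mul_eq_zero.mp h' with h'' | h''
    · exact hm0 h''
    · exact nz 2 h''
end

section
/- Let q be odd with q ≡ 3 (mod 4), and b ∈ F_{q^2} \ F_q with b^2 = -1 (so b^q = -b and b^{q+1} = 1). If m ∈ F_{q^8} satisfies 0 = 4(m + m^{q^4}) + b·m^{1+q^3+q^4+q^5}(m^{q^2} - m^{q^6}), then m = 0. -/
private lemma pow_q_mod {F : Type} [Monoid F] {q : ℕ} {m : F} (h8 : m ^ q ^ 8 = m) :
    ∀ n : ℕ, m ^ q ^ n = m ^ q ^ (n % 8) := by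
  intro n
  induction n using Nat.strong_induction_on with
  | _ n ih =>
    by_cases h : n < 8
    · rw [Nat.mod_eq_of_lt h]
    · have hn : n = 8 + (n - 8) := by omega
      have h1 : m ^ q ^ n = m ^ q ^ (n - 8) := by
        conv_lhs => rw [hn]
        rw [pow_add, pow_mul, h8]
      rw [h1, ih (n - 8) (by omega)]
      have : (n - 8) % 8 = n % 8 := by omega
      rw [this]

/-- q ≡ 3 (mod 4), b ∈ F_{q^2} \ F_q, b² = -1; the equation
0 = 4(m + m^{q^4}) + b m^{1+q^3+q^4+q^5}(m^{q^2} - m^{q^6}) forces m = 0. -/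
theorem stmt_16 (q : ℕ) (hq : q % 4 = 3)
    (F : Type) [Field F] [Fintype F] (hF : Fintype.card F = q ^ 8)
    (b : F) (hbq2 : b ^ q ^ 2 = b) (hbq : b ^ q ≠ b) (hb2 : b ^ 2 = -1)
    (m : F)
    (hm : 0 = 4 * (m + m ^ q ^ 4)
        + b * m ^ (1 + q ^ 3 + q ^ 4 + q ^ 5) * (m ^ q ^ 2 - m ^ q ^ 6)) :
    m = 0 := by
  by_contra hm0
  -- characteristic setup
  obtain ⟨p, hcp⟩ := CharP.exists F
  have hp : p.Prime := CharP.char_is_prime F p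
  haveI := Fact.mk hp
  obtain ⟨n, -, hcard⟩ := FiniteField.card F p
  have hqpow : q ∣ p ^ (n : ℕ) := by
    rw [← hcard, hF]; exact dvd_pow_self q (by norm_num)
  obtain ⟨k, -, hk⟩ := (Nat.dvd_prime_pow hp).mp hqpow
  -- p is odd
  have hpodd : p ≠ 2 := by
    rintro rfl
    have h1 : q % 2 = 1 := by omega
    rcases k with _ | k
    · simp at hk; omega
    · rw [hk] at h1; simp [Nat.pow_mod] at h1
  have h2 : (2 : F) ≠ 0 := by
    intro h
    have h2' : (p : ℕ) ∣ 2 := (CharP.cast_eq_zero_iff F p 2).mp (by exact_mod_cast h)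
    exact hpodd ((Nat.prime_dvd_prime_iff_eq hp Nat.prime_two).mp h2')
  -- Frobenius-type ring homs
  set σ : ℕ → F →+* F := fun j => iterateFrobenius F p (j * k) with hσdef
  have hσ : ∀ (j : ℕ) (x : F), σ j x = x ^ q ^ j := by
    intro j x
    rw [hσdef]
    simp only [iterateFrobenius_def]
    rw [hk, ← pow_mul, mul_comm k j]
  -- m ^ q ^ 8 = m
  have h8 : m ^ q ^ 8 = m := by rw [← hF]; exact FiniteField.pow_card m
  have hcyc : ∀ i : ℕ, m ^ q ^ i = m ^ q ^ (i % 8) := pow_q_mod h8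
  have hstep : ∀ i j : ℕ, (m ^ q ^ i) ^ q ^ j = m ^ q ^ ((i + j) % 8) := by
    intro i j
    rw [← pow_mul, ← pow_add, hcyc]
  have hb4 : b ^ q ^ 4 = b := by
    have h44 : q ^ 4 = q ^ 2 * q ^ 2 := by ring
    rw [h44, pow_mul, hbq2, hbq2]
  -- expand the product of powers in hm
  simp only [pow_add, pow_one] at hm
  -- apply σ 4 to hm
  have hE4 := congrArg (σ 4) hm
  simp only [map_add, map_mul, map_sub, map_zero, map_ofNat] at hE4
  simp only [hσ, hstep, hb4] at hE4
  norm_num at hE4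
  -- case m^{q^2} = m^{q^6}
  by_cases hcase : m ^ q ^ 2 = m ^ q ^ 6
  · have h04 := congrArg (σ 6) hcase
    simp only [hσ, hstep] at h04
    norm_num at h04
    -- h04 : m = m ^ q ^ 4
    rw [← h04, ← hcase] at hm
    have h8m : (8 : F) * m = 0 := by linear_combination -hm
    rcases mul_eq_zero.mp h8m with h | h
    · have h8' : (8 : F) = 2 * 2 * 2 := by norm_num
      rw [h8'] at h
      exact (mul_ne_zero (mul_ne_zero h2 h2) h2) h
    · exact hm0 h
  · -- subtract hE4 from hm to get the key relation
    have hb0 : b ≠ 0 := by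
      intro h; rw [h] at hb2
      simp at hb2
    have hprod : (b * (m ^ q ^ 2 - m ^ q ^ 6) * m * m ^ q ^ 4) *
        (m ^ q ^ 3 * m ^ q ^ 5 + m ^ q ^ 1 * m ^ q ^ 7) = 0 := by
      linear_combination hE4 - hm
    have hR1 : m ^ q ^ 3 * m ^ q ^ 5 + m ^ q ^ 1 * m ^ q ^ 7 = 0 := by
      rcases mul_eq_zero.mp hprod with h | h
      · exfalso
        rcases mul_eq_zero.mp h with h | h
        · rcases mul_eq_zero.mp h with h | h
          · rcases mul_eq_zero.mp h with h | h
            · exact hb0 h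
            · exact hcase (by linear_combination h)
          · exact hm0 h
        · exact hm0 (pow_eq_zero_iff (pow_pos (by omega : 0 < q) 4).ne' |>.mp h)
      · exact h
    -- apply σ 1 and σ 3
    have hA := congrArg (σ 1) hR1
    have hB := congrArg (σ 3) hR1
    simp only [map_add, map_mul, map_zero] at hA hB
    simp only [hσ, hstep] at hA hB
    norm_num at hA hB
    have hfac : (m - m ^ q ^ 4) * (m ^ q ^ 2 - m ^ q ^ 6) = 0 := by
      linear_combination hA - hB
    rcases mul_eq_zero.mp hfac with h | h
    · have h04 : m = m ^ q ^ 4 := by linear_combination h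
      have h26 := congrArg (σ 2) h04
      simp only [hσ, hstep] at h26
      norm_num at h26
      exact hcase h26
    · exact hcase (by linear_combination h)
end

section
/- For q an odd prime power and b ∈ F_{q^8} with b^2 = -1, the F_q-subspace U_{b,1} = {(x, b·x^q + x^{q^5}) : x ∈ F_{q^8}} is scattered: for every m ∈ F_{q^8}, the F_q-subspace of solutions x ∈ F_{q^8} of m·x + b·x^q + x^{q^5} = 0 has F_q-dimension at most 1. -/
private lemma cyc_core {F : Type} [Field F] (two_ne : (2:F) ≠ 0) (s : ℕ → F) (pi : F)
    (hp : ∀ j, s j * s (j+4) = pi)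
    (hc : ∀ j, (s j - s (j+1)) * (s (j+1) - s (j+2)) = -2 * s (j+1) * (s (j+1) - 1))
    (h0 : ∀ j, s j ≠ 0) (h1 : ∀ j, s j ≠ 1) : False := by
  have hpi : pi ≠ 0 := by rw [← hp 0]; exact mul_ne_zero (h0 0) (h0 4)
  have hs1 : ∀ j, s j - 1 ≠ 0 := fun j => sub_ne_zero.mpr (h1 j)
  -- diamond relation
  have hd : ∀ j, s j * s (j+2) * (pi - s (j+1)) = pi * s (j+1) * (s (j+1) - 1) := by
    intro j
    have g1 := hc j
    have g2 := hc (j+4)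
    rw [show j+4+1 = j+5 by omega, show j+4+2 = j+6 by omega] at g2
    have p1 := hp j
    have p2 := hp (j+1); rw [show j+1+4 = j+5 by omega] at p2
    have p3 := hp (j+2); rw [show j+2+4 = j+6 by omega] at p3
    have key : 2 * pi * (s j * s (j+2) * (pi - s (j+1)) - pi * s (j+1) * (s (j+1) - 1)) = 0 := by
      linear_combination (s j * s (j+1)^2 * s (j+2)) * g2 - pi^2 * g1
        + (- s (j+1)^2 * s (j+2) * s (j+5) + s (j+1)^2 * s (j+2) * s (j+6)) * p1
        + (- pi * s j * s (j+2) - pi * s (j+1) * s (j+2) + 2 * s j * s (j+1) * s (j+2)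
           - s j * s (j+1) * s (j+2) * s (j+5) - s j * s (j+1) * s (j+2) * s (j+6)) * p2
        + (- pi * s j * s (j+1) + pi * s (j+1)^2) * p3
    have h2pi : (2:F) * pi ≠ 0 := mul_ne_zero two_ne hpi
    exact sub_eq_zero.mp ((mul_eq_zero.mp key).resolve_left h2pi)
  -- pi - s (j+1) never zero
  have hne : ∀ j, pi - s (j+1) ≠ 0 := by
    intro j h
    have hdj := hd j
    rw [h, mul_zero] at hdj
    rcases mul_eq_zero.mp hdj.symm with h' | h'
    · rcases mul_eq_zero.mp h' with h'' | h''
      · exact hpi h''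
      · exact h0 (j+1) h''
    · exact hs1 (j+1) h'
  -- R3
  have hR3 : ∀ j, (s j - 1) * (s (j+2) - 1) * pi = (pi - 1) * (s j * s (j+2)) := by
    intro j
    have g1 := hc j
    have hdj := hd j
    have key : ((s j - 1) * (s (j+2) - 1) * pi - (pi - 1) * (s j * s (j+2)))
        * (s (j+1) * (pi - s (j+1))) = 0 := by
      linear_combination (- pi + s (j+1)) * hdj + (- pi^2 + pi * s (j+1)) * g1
    have hne' : s (j+1) * (pi - s (j+1)) ≠ 0 := mul_ne_zero (h0 (j+1)) (hne j)
    exact sub_eq_zero.mp ((mul_eq_zero.mp key).resolve_right hne')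
  -- s is 4-periodic
  have heq : ∀ j, s j = s (j+4) := by
    intro j
    have r1 := hR3 j
    have r2 := hR3 (j+2)
    rw [show j+2+2 = j+4 by omega] at r2
    have key : (s (j+2) - 1) * pi * (s j - s (j+4)) = 0 := by
      linear_combination (s (j+4)) * r1 - (s j) * r2
    have hne' : (s (j+2) - 1) * pi ≠ 0 := mul_ne_zero (hs1 (j+2)) hpi
    exact sub_eq_zero.mp ((mul_eq_zero.mp key).resolve_left hne')
  have hsq : ∀ j, s j * s j = pi := by
    intro j
    have := hp j
    rw [← heq j] at this
    exact this
  -- finale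
  have h02 : s 0 * s 2 = s 1 * s 1 := by
    have d0 := hd 0
    norm_num at d0
    have q1 := hsq 1
    have key : (s 0 * s 2 - s 1 * s 1) * (s 1 * (s 1 - 1)) = 0 := by
      linear_combination d0 + (s 0 * s 2 - s 1 * s 1 + s 1) * q1
    have hne' : s 1 * (s 1 - 1) ≠ 0 := mul_ne_zero (h0 1) (hs1 1)
    exact sub_eq_zero.mp ((mul_eq_zero.mp key).resolve_right hne')
  have hsum : s 0 + s 2 = 2 := by
    have g := hc 0
    norm_num at g
    have key : s 1 * (s 0 + s 2 - 2) = 0 := by linear_combination g + h02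
    have h' := (mul_eq_zero.mp key).resolve_left (h0 1)
    linear_combination h'
  have h00 : s 0 = s 2 := by
    have k : (s 0 - s 2) * (s 0 + s 2) = 0 := by linear_combination hsq 0 - hsq 2
    rw [hsum] at k
    rcases mul_eq_zero.mp k with h' | h'
    · exact sub_eq_zero.mp h'
    · exact absurd h' two_ne
  have : s 0 = 1 := by
    have h2s : (2:F) * s 0 = 2 * 1 := by linear_combination hsum + h00
    exact mul_left_cancel₀ two_ne h2s
  exact h1 0 this

/-- for q odd and b² = -1, U_{b,1} ⊆ F_{q^8} × F_{q^8} is scattered: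
for every m the solution space of m·x + b·x^q + x^{q^5} = 0 has F_q-dimension ≤ 1. -/
theorem stmt_17 (q : ℕ) (hq : Odd q)
    (K F : Type) [Field K] [Field F] [Algebra K F] [Fintype K] [Fintype F]
    (hK : Fintype.card K = q) (hF : Fintype.card F = q ^ 8)
    (b : F) (hb : b ^ 2 = -1) :
    ∀ m : F, ∀ U : Submodule K F,
      (↑U ⊆ {x : F | m * x + b * x ^ q + x ^ q ^ 5 = 0}) →
      Module.finrank K U ≤ 1 := by
  classical
  obtain ⟨p, hp⟩ := CharP.exists F
  haveI := hp
  have hpp : p.Prime := CharP.char_is_prime F p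
  haveI : Fact p.Prime := ⟨hpp⟩
  haveI hKp : CharP K p := (Algebra.charP_iff K F p).mpr hp
  obtain ⟨r, hrp, hqr⟩ := FiniteField.card K p
  rw [hK] at hqr
  have hq2 : 1 < q := hK ▸ Fintype.one_lt_card
  have hpodd : p ≠ 2 := by
    rintro rfl
    rw [hqr] at hq
    rcases Nat.even_pow.mpr ⟨even_two, r.pos.ne'⟩ with h
    exact (Nat.not_odd_iff_even.mpr h) hq
  have h2 : (2 : F) ≠ 0 := by
    intro h20
    have h := (CharP.cast_eq_zero_iff F p 2).mp (by exact_mod_cast h20)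
    exact hpodd ((Nat.prime_dvd_prime_iff_eq hpp Nat.prime_two).mp h)
  haveI : ExpChar F p := ExpChar.prime hpp
  set φ : F →+* F := iterateFrobenius F p r with hφdef
  have hφq : ∀ z : F, φ z = z ^ q := by
    intro z; rw [hφdef, iterateFrobenius_def, ← hqr]
  have hφj : ∀ (j : ℕ) (z : F), φ^[j] z = z ^ q ^ j := by
    intro j
    induction j with
    | zero => simp
    | succ n ih => intro z; rw [Function.iterate_succ_apply', ih, hφq, ← pow_mul, pow_succ]
  have hφ8 : ∀ z : F, φ^[8] z = z := by
    intro z; rw [hφj, ← hF]; exact FiniteField.pow_card z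
  have hinj : Function.Injective φ := φ.injective
  have hxq : ∀ z : F, z ^ q = φ^[1] z := fun z => by rw [hφj 1 z, pow_one]
  intro m U hU
  set b1 : F := φ b with hb1d
  have hφb : φ b = b1 := rfl
  have hb1sq : b1 ^ 2 = -1 := by rw [hb1d, ← map_pow, hb, map_neg, map_one]
  have hbne : b ≠ 0 := by intro h; rw [h] at hb; norm_num at hb
  have hb1ne : b1 ≠ 0 := by intro h; rw [h] at hb1sq; norm_num at hb1sq
  have hb2 : φ b1 = b := by
    have hfact : (b1 - b) * (b1 + b) = 0 := by linear_combination hb1sq - hb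
    rcases mul_eq_zero.mp hfact with h | h
    · have hh : b1 = b := by linear_combination h
      calc φ b1 = φ b := by rw [hh]
      _ = b1 := rfl
      _ = b := hh
    · have hh : b1 = -b := by linear_combination h
      calc φ b1 = φ (-b) := by rw [hh]
      _ = - φ b := by rw [map_neg]
      _ = - b1 := rfl
      _ = b := by rw [hh]; ring
  set M : ℕ → F := fun i => φ^[i] m with hM
  have hM0 : M 0 = m := rfl
  have hMs : ∀ i, φ (M i) = M (i+1) := by
    intro i; rw [hM]; exact (Function.iterate_succ_apply' φ i m).symm
  have hM8 : M 8 = M 0 := by rw [hM]; exact hφ8 m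
  set B0 : F := b1 * M 1 + b * M 5 with hB0
  set B1 : F := b * M 2 + b1 * M 6 with hB1
  set B2 : F := b1 * M 3 + b * M 7 with hB2
  set N0 : F := M 0 * M 5 with hN0
  set N1 : F := M 1 * M 6 with hN1
  set N2 : F := M 2 * M 7 with hN2
  set S0 : F := B2*B1*B0 + 2*(B2*N1) + 2*(N2*B0) with hS0
  set T0 : F := B2*B1*N0 + 2*(N2*N0) with hT0
  set Pr : F := M 4 * S0 + 16 with hPr
  set Qr : F := 8*(b*M 0) - M 4 * T0 with hQr
  have hφB0 : φ B0 = B1 := by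
    rw [hB0, hB1, map_add, map_mul, map_mul, hb2, hMs, hMs, hφb]
  have hφB1 : φ B1 = B2 := by
    rw [hB1, hB2, map_add, map_mul, map_mul, hb2, hMs, hMs, hφb]
  have hφN0 : φ N0 = N1 := by rw [hN0, hN1, map_mul, hMs, hMs]
  have hφN1 : φ N1 = N2 := by rw [hN1, hN2, map_mul, hMs, hMs]
  -- kernel relation
  have lemA : ∀ x : F, m * x + b * x ^ q + x ^ q ^ 5 = 0 → Pr * φ^[1] x = Qr * x := by
    intro x hx
    have hit : ∀ n : ℕ, φ (φ^[n] x) = φ^[n+1] x := fun n => (Function.iterate_succ_apply' φ n x).symm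
    have h1x : φ x = φ^[1] x := (congrFun (Function.iterate_one φ) x).symm
    have e0 : M 0 * φ^[0] x + b * φ^[1] x + φ^[5] x = 0 := by
      show m * x + b * φ^[1] x + φ^[5] x = 0
      rw [← hxq, hφj 5]; exact hx
    have e1 : M 1 * φ^[1] x + b1 * φ^[2] x + φ^[6] x = 0 := by
      have h := congrArg φ e0
      simp only [map_add, map_mul, map_zero, hMs, hφb, hit, Nat.reduceAdd] at h
      exact h
    have e2 : M 2 * φ^[2] x + b * φ^[3] x + φ^[7] x = 0 := by
      have h := congrArg φ e1
      simp only [map_add, map_mul, map_zero, hMs, hb2, hit, Nat.reduceAdd] at h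
      exact h
    have e3 : M 3 * φ^[3] x + b1 * φ^[4] x + φ^[8] x = 0 := by
      have h := congrArg φ e2
      simp only [map_add, map_mul, map_zero, hMs, hφb, hit, Nat.reduceAdd] at h
      exact h
    have e4 : M 4 * φ^[4] x + b * φ^[5] x + φ^[1] x = 0 := by
      have h := congrArg φ e3
      simp only [map_add, map_mul, map_zero, hMs, hb2, hit, Nat.reduceAdd] at h
      rw [show (9:ℕ) = 1 + 8 from rfl, Function.iterate_add_apply, hφ8 x] at h
      exact h
    have e0' : M 0 * x + b * φ^[1] x + φ^[5] x = 0 := e0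
    have eq2 : M 4 * φ^[4] x = b * M 0 * x - 2 * φ^[1] x := by
      linear_combination e4 - b * e0' + (φ^[1] x) * hb
    have f2 : M 5 * φ^[5] x = b1 * M 1 * φ^[1] x - 2 * φ^[2] x := by
      have h := congrArg φ eq2
      simp only [map_sub, map_mul, map_ofNat, hMs, hφb, hit, h1x, Nat.reduceAdd] at h
      exact h
    have eq3 : 2 * φ^[2] x = B0 * φ^[1] x + N0 * x := by
      rw [hB0, hN0]
      linear_combination f2 - M 5 * e0'
    have eq3' : 2 * φ^[3] x = B1 * φ^[2] x + N1 * φ^[1] x := by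
      have h := congrArg φ eq3
      simp only [map_add, map_mul, map_ofNat, hφB0, hφN0, hit, h1x, Nat.reduceAdd] at h
      exact h
    have eq3'' : 2 * φ^[4] x = B2 * φ^[3] x + N2 * φ^[2] x := by
      have h := congrArg φ eq3'
      simp only [map_add, map_mul, map_ofNat, hφB1, hφN1, hit, Nat.reduceAdd] at h
      exact h
    have comb : 8 * φ^[4] x = S0 * φ^[1] x + T0 * x := by
      rw [hS0, hT0]
      linear_combination 4 * eq3'' + 2 * B2 * eq3' + (B2 * B1 + 2 * N2) * eq3
    rw [hPr, hQr]
    linear_combination 8 * eq2 - M 4 * comb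
  have h16ne : (16:F) ≠ 0 := by
    intro h
    have h4' : (2:F)^4 = 16 := by norm_num
    exact pow_ne_zero 4 h2 (h4'.trans h)
  -- ## impossibility of Pr = Qr = 0 for m ≠ 0
  have lemB : m ≠ 0 → Pr = 0 → Qr = 0 → False := by
    intro hm hPzero hQzero
    have hqne : q ≠ 0 := by omega
    have hMne : ∀ i, M i ≠ 0 := by
      intro i h
      rw [hM] at h
      simp only [hφj] at h
      exact hm ((pow_eq_zero_iff (pow_ne_zero i hqne)).mp h)
    have h4 : (4:F) ≠ 0 := by
      have h44 : (4:F) = 2*2 := by norm_num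
      rw [h44]; exact mul_ne_zero h2 h2
    set c : F := (4:F)⁻¹ with hcd
    have hc4 : (4:F) * c = 1 := mul_inv_cancel₀ h4
    have hcne : c ≠ 0 := by intro h; rw [h, mul_zero] at hc4; exact zero_ne_one hc4
    have hφc : φ c = c := by rw [hcd, map_inv₀, map_ofNat]
    set s : F := b1 * (M 0 * M 1 * M 2 * M 3) * c with hsd
    set sf : ℕ → F := fun j => φ^[j] s with hsfd
    have hsf0 : sf 0 = s := rfl
    have hsfs : ∀ j, sf (j+1) = φ (sf j) := by
      intro j; rw [hsfd]; exact Function.iterate_succ_apply' φ j s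
    have hsne : s ≠ 0 := by
      rw [hsd]
      exact mul_ne_zero (mul_ne_zero hb1ne
        (mul_ne_zero (mul_ne_zero (mul_ne_zero (hMne 0) (hMne 1)) (hMne 2)) (hMne 3))) hcne
    have hs0 : ∀ j, sf j ≠ 0 := by
      intro j h
      rw [hsfd] at h
      have hz : φ^[j] (0:F) = 0 := Function.iterate_fixed (map_zero φ) j
      exact hsne ((Function.Injective.iterate hinj j) (h.trans hz.symm))
    have hsf1 : sf 1 = b * (M 1 * M 2 * M 3 * M 4) * c := by
      rw [hsfs 0, hsf0, hsd]
      simp only [map_mul, hb2, hMs, hφc, Nat.reduceAdd]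
    have hsf2 : sf 2 = b1 * (M 2 * M 3 * M 4 * M 5) * c := by
      rw [hsfs 1, hsf1]
      simp only [map_mul, hφb, hMs, hφc, Nat.reduceAdd]
    have hsf3 : sf 3 = b * (M 3 * M 4 * M 5 * M 6) * c := by
      rw [hsfs 2, hsf2]
      simp only [map_mul, hb2, hMs, hφc, Nat.reduceAdd]
    have hsf4 : sf 4 = b1 * (M 4 * M 5 * M 6 * M 7) * c := by
      rw [hsfs 3, hsf3]
      simp only [map_mul, hφb, hMs, hφc, Nat.reduceAdd]
    have hsf5 : sf 5 = b * (M 5 * M 6 * M 7 * M 0) * c := by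
      rw [hsfs 4, hsf4]
      simp only [map_mul, hb2, hMs, hφc, Nat.reduceAdd, hM8]
    set piv : F := sf 0 * sf 4 with hpivd
    have hpp : φ piv = piv := by
      rw [hpivd, map_mul, ← hsfs 0, ← hsfs 4]
      rw [hsf0, hsd, hsf1, hsf4, hsf5]
      linear_combination (M 0*M 1*M 2*M 3*M 4*M 5*M 6*M 7*c*c)*hb
        - (M 0*M 1*M 2*M 3*M 4*M 5*M 6*M 7*c*c)*hb1sq
    have hpi : ∀ j, sf j * sf (j+4) = piv := by
      intro j
      induction j with
      | zero => rfl
      | succ n ih =>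
        rw [show n+1+4 = (n+4)+1 by omega, hsfs, hsfs, ← map_mul, ih, hpp]
    have hQQ : 8*(b*M 0) - M 4 * ((b1*M 3 + b*M 7)*(b*M 2 + b1*M 6)*(M 0*M 5)
        + 2*((M 2*M 7)*(M 0*M 5))) = 0 := by
      rw [← hN0, ← hN2, ← hB1, ← hB2, ← hT0, ← hQr]
      exact hQzero
    have base2 : (sf 2 - sf 3) * (sf 3 - sf 4) = -2 * sf 3 * (sf 3 - 1) := by
      rw [hsf2, hsf3, hsf4]
      have key : M 0 * ((b1*(M 2*M 3*M 4*M 5)*c - b*(M 3*M 4*M 5*M 6)*c)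
          * (b*(M 3*M 4*M 5*M 6)*c - b1*(M 4*M 5*M 6*M 7)*c)
          + 2 * (b*(M 3*M 4*M 5*M 6)*c) * (b*(M 3*M 4*M 5*M 6)*c - 1)) = 0 := by
        linear_combination (-(M 3*M 4*M 5*M 6*c*c)) * hQQ
          + (-(M 0*M 2*M 3*M 4*M 4*M 5*M 5*M 6*M 7*c*c) + M 0*M 3*M 3*M 4*M 4*M 5*M 5*M 6*M 6*c*c) * hb
          + (-(M 0*M 2*M 3*M 4*M 4*M 5*M 5*M 6*M 7*c*c) - M 0*M 3*M 3*M 4*M 4*M 5*M 5*M 6*M 6*c*c) * hb1sq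
          + (2*M 0*M 3*M 4*M 5*M 6*b*c) * hc4
      have h' := (mul_eq_zero.mp key).resolve_left (hMne 0)
      linear_combination h'
    have club' : ∀ k, (sf (k+2) - sf (k+3)) * (sf (k+3) - sf (k+4))
        = -2 * sf (k+3) * (sf (k+3) - 1) := by
      intro k
      induction k with
      | zero => exact base2
      | succ n ih =>
        have h := congrArg φ ih
        simp only [map_mul, map_sub, map_neg, map_one, map_ofNat, ← hsfs] at h
        rw [show n+2+1 = n+1+2 by omega, show n+3+1 = n+1+3 by omega,
          show n+4+1 = n+1+4 by omega] at h
        exact h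
    have hper : ∀ j, sf (j+8) = sf j := by
      intro j
      show φ^[j+8] s = φ^[j] s
      rw [Function.iterate_add_apply, hφ8 s]
    have club : ∀ j, (sf j - sf (j+1)) * (sf (j+1) - sf (j+2))
        = -2 * sf (j+1) * (sf (j+1) - 1) := by
      intro j
      have h := club' (j+6)
      rw [show j+6+2 = j+8 by omega, show j+6+3 = (j+1)+8 by omega,
        show j+6+4 = (j+2)+8 by omega, hper, hper, hper] at h
      exact h
    by_cases hs1 : s = 1
    · have hsfall : ∀ j, sf j = 1 := by
        intro j
        rw [hsfd]
        show φ^[j] s = 1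
        rw [hs1]
        exact Function.iterate_fixed (map_one φ) j
      have e0s : b1 * (M 0*M 1*M 2*M 3) * c = 1 := by rw [← hsd]; exact hs1
      have e1s : b * (M 1*M 2*M 3*M 4) * c = 1 := by rw [← hsf1]; exact hsfall 1
      have e2s : b1 * (M 2*M 3*M 4*M 5) * c = 1 := by rw [← hsf2]; exact hsfall 2
      have e3s : b * (M 3*M 4*M 5*M 6) * c = 1 := by rw [← hsf3]; exact hsfall 3
      have e4s : b1 * (M 4*M 5*M 6*M 7) * c = 1 := by rw [← hsf4]; exact hsfall 4
      have hr1 : M 5 = -(b*b1) * M 1 := by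
        have key : (b1*(M 2*M 3*M 4)*c) * (M 5 + b*b1*M 1) = 0 := by
          linear_combination e2s - e1s + (b*(M 1*M 2*M 3*M 4)*c)*hb1sq
        have h' := (mul_eq_zero.mp key).resolve_left (mul_ne_zero (mul_ne_zero hb1ne
          (mul_ne_zero (mul_ne_zero (hMne 2) (hMne 3)) (hMne 4))) hcne)
        linear_combination h'
      have hr2 : M 6 = -(b*b1) * M 2 := by
        have key : (b*(M 3*M 4*M 5)*c) * (M 6 + b*b1*M 2) = 0 := by
          linear_combination e3s - e2s + (b1*(M 2*M 3*M 4*M 5)*c)*hb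
        have h' := (mul_eq_zero.mp key).resolve_left (mul_ne_zero (mul_ne_zero hbne
          (mul_ne_zero (mul_ne_zero (hMne 3) (hMne 4)) (hMne 5))) hcne)
        linear_combination h'
      have hr3 : M 7 = -(b*b1) * M 3 := by
        have key : (b1*(M 4*M 5*M 6)*c) * (M 7 + b*b1*M 3) = 0 := by
          linear_combination e4s - e3s + (b*(M 3*M 4*M 5*M 6)*c)*hb1sq
        have h' := (mul_eq_zero.mp key).resolve_left (mul_ne_zero (mul_ne_zero hb1ne
          (mul_ne_zero (mul_ne_zero (hMne 4) (hMne 5)) (hMne 6))) hcne)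
        linear_combination h'
      have hPP : M 4 * ((b1*M 3 + b*M 7)*(b*M 2 + b1*M 6)*(b1*M 1 + b*M 5)
          + 2*((b1*M 3 + b*M 7)*(M 1*M 6)) + 2*((M 2*M 7)*(b1*M 1 + b*M 5))) + 16 = 0 := by
        rw [← hN1, ← hN2, ← hB0, ← hB1, ← hB2, ← hS0, ← hPr]
        exact hPzero
      have h16 : (16:F) = 0 := by
        linear_combination hPP
          - (M 2*M 3*M 4*b^2*b1 + 2*M 2*M 4*M 7*b + M 2*M 4*M 7*b^3 + M 3*M 4*M 6*b*b1^2
             + M 4*M 6*M 7*b^2*b1) * hr1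
          - (-(M 1*M 3*M 4*b^2*b1^3) + 2*M 1*M 3*M 4*b1 + M 1*M 3*M 4*b1^3 + 2*M 1*M 4*M 7*b
             - M 1*M 4*M 7*b^3*b1^2 + M 1*M 4*M 7*b*b1^2) * hr2
          - (-(M 1*M 2*M 4*b^4*b1) + M 1*M 2*M 4*b^4*b1^3 - 3*M 1*M 2*M 4*b^2*b1
             - M 1*M 2*M 4*b^2*b1^3 + 2*M 1*M 2*M 4*b1) * hr3
          - (M 1*M 2*M 3*M 4*b^3*b1^2 - M 1*M 2*M 3*M 4*b^3*b1^4 + M 1*M 2*M 3*M 4*b*b1^2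
             + 3*M 1*M 2*M 3*M 4*b*b1^4) * hb
          - (-(4*M 1*M 2*M 3*M 4*b*b1^2)) * hb1sq
      exact h16ne h16
    · have hs1' : ∀ j, sf j ≠ 1 := by
        intro j h
        apply hs1
        have hone : φ^[j] (1:F) = 1 := Function.iterate_fixed (map_one φ) j
        rw [hsfd] at h
        exact (Function.Injective.iterate hinj j) (h.trans hone.symm)
      exact cyc_core h2 sf piv hpi club hs0 hs1'
  -- ## symmetric kernel relation
  have key : ∀ x y : F, (m*x + b*x^q + x^q^5 = 0) → (m*y + b*y^q + y^q^5 = 0) →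
      φ^[1] x * y = φ^[1] y * x := by
    intro x y hx hy
    by_cases hPz : Pr = 0
    · have hm : m ≠ 0 := by
        intro hm0
        have hM4 : M 4 = 0 := by
          rw [hM]
          show φ^[4] m = 0
          rw [hm0]
          exact Function.iterate_fixed (map_zero φ) 4
        rw [hPr, hM4, zero_mul, zero_add] at hPz
        exact h16ne hPz
      by_cases hQz : Qr = 0
      · exact (lemB hm hPz hQz).elim
      · have hx0 : x = 0 := by
          have h := lemA x hx
          rw [hPz, zero_mul] at h
          exact ((mul_eq_zero.mp h.symm).resolve_left hQz)
        have hy0 : y = 0 := by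
          have h := lemA y hy
          rw [hPz, zero_mul] at h
          exact ((mul_eq_zero.mp h.symm).resolve_left hQz)
        rw [hx0, hy0]
    · have hx' := lemA x hx
      have hy' := lemA y hy
      have hz : Pr * (φ^[1] x * y - φ^[1] y * x) = 0 := by
        linear_combination y * hx' - x * hy'
      have h' := (mul_eq_zero.mp hz).resolve_left hPz
      linear_combination h'
  -- ## conclusion
  by_cases hex : ∃ x ∈ U, x ≠ (0:F)
  · obtain ⟨x, hxU, hx0⟩ := hex
    have hxqne : x ^ q ≠ 0 := pow_ne_zero q hx0
    have hspan : ∀ y ∈ U, ∃ k : K, y = k • x := by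
      intro y hyU
      have hrel := key x y (hU hxU) (hU hyU)
      rw [← hxq x, ← hxq y] at hrel
      -- hrel : x^q * y = y^q * x
      set z : F := y * x⁻¹ with hzd
      have hzq : z ^ q = z := by
        have hinvx : x⁻¹ * x = 1 := inv_mul_cancel₀ hx0
        have hinvq : (x⁻¹)^q * x^q = 1 := by rw [← mul_pow, inv_mul_cancel₀ hx0, one_pow]
        have hstep : z ^ q * (x ^ q * x) = z * (x ^ q * x) := by
          calc z ^ q * (x ^ q * x) = y ^ q * x * ((x⁻¹)^q * x^q) := by rw [hzd, mul_pow]; ring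
          _ = y ^ q * x := by rw [hinvq, mul_one]
          _ = x ^ q * y := hrel.symm
          _ = y * x ^ q * (x⁻¹ * x) := by rw [hinvx, mul_one]; ring
          _ = z * (x ^ q * x) := by rw [hzd]; ring
        exact mul_right_cancel₀ (mul_ne_zero hxqne hx0) hstep
      -- z lies in the image of K
      have hk : ∃ k : K, algebraMap K F k = z := by
        have hq1 : 1 < q := hq2
        set f : Polynomial F := Polynomial.X ^ q - Polynomial.X with hf
        have hfne : f ≠ 0 := FiniteField.X_pow_card_sub_X_ne_zero F hq1
        have hdeg : f.natDegree = q := FiniteField.X_pow_card_sub_X_natDegree_eq F hq1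
        set T : Finset F := Finset.univ.filter (fun w => w ^ q = w) with hT
        have hTsub : T ⊆ f.roots.toFinset := by
          intro w hw
          simp only [hT, Finset.mem_filter] at hw
          rw [Multiset.mem_toFinset, Polynomial.mem_roots hfne]
          simp [hf, Polynomial.IsRoot, sub_eq_zero, hw.2]
        have hTcard : T.card ≤ q := by
          calc T.card ≤ f.roots.toFinset.card := Finset.card_le_card hTsub
          _ ≤ Multiset.card f.roots := Multiset.toFinset_card_le _
          _ ≤ f.natDegree := Polynomial.card_roots' f
          _ = q := hdeg
        set S : Finset F := Finset.univ.image (algebraMap K F) with hS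
        have hScard : S.card = q := by
          rw [hS, Finset.card_image_of_injective _ (algebraMap K F).injective,
            Finset.card_univ, hK]
        have hSsub : S ⊆ T := by
          intro w hw
          simp only [hS, Finset.mem_image] at hw
          obtain ⟨k, _, rfl⟩ := hw
          simp only [hT, Finset.mem_filter, Finset.mem_univ, true_and]
          rw [← map_pow]
          congr 1
          rw [← hK]
          exact FiniteField.pow_card k
        have hzT : z ∈ T := by simp [hT, hzq]
        by_contra hcon
        push_neg at hcon
        have hzS : z ∉ S := by
          simp only [hS, Finset.mem_image]
          rintro ⟨k, _, hk⟩
          exact hcon k hk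
        have : q + 1 ≤ T.card := by
          have h1 : insert z S ⊆ T := Finset.insert_subset hzT hSsub
          have h2 := Finset.card_le_card h1
          rw [Finset.card_insert_of_notMem hzS, hScard] at h2
          omega
        omega
      obtain ⟨k, hk⟩ := hk
      refine ⟨k, ?_⟩
      rw [Algebra.smul_def, hk, hzd]
      field_simp
    have hfin : Module.Finite K F := Module.Finite.of_finite
    have hle : U ≤ Submodule.span K {x} := by
      intro y hy
      obtain ⟨k, rfl⟩ := hspan y hy
      exact Submodule.smul_mem _ k (Submodule.mem_span_singleton_self x)
    calc Module.finrank K U ≤ Module.finrank K (Submodule.span K {x}) :=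
        Submodule.finrank_mono hle
    _ = 1 := finrank_span_singleton hx0
  · push_neg at hex
    have hUbot : U = ⊥ := by
      rw [Submodule.eq_bot_iff]
      exact fun y hy => hex y hy
    rw [hUbot]
    simp
end
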